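/- For ω > 0 and -2√ω < c < 2√ω, ∫_ℝ ϕ_{ω,c}(x)⁶ dx = 32(c² + 2ω)·arctan(√((2√ω+c)/(2√ω-c))) + 24c√(4ω-c²). -/

import Mathlib

/-!
With `b = c / (2√ω)` and `a = √(4ω - c²)`, `ϕ⁶ = (a² / √ω)³ (cosh (a x) - b)⁻³`. Evenness and the
substitution `u = a x` reduce the integral to `2 / a · ∫₀^∞ (cosh u - b)⁻³ du`, which an explicit
primitive evaluates for `|b| < 1`: its arctan term tends to `π / 2` at infinity, and at `u = 0`
it leaves `arctan √((1 + b) / (1 - b))` through `arctan x⁻¹ = π / 2 - arctan x`.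
-/

open Real Filter MeasureTheory Set Topology

/-- The real soliton profile `ϕ_{ω,c}` of the derivative NLS. -/
noncomputable def varphi (ω c x : ℝ) : ℝ :=
  (Real.sqrt ω / (4 * ω - c ^ 2)
      * (Real.cosh (x * Real.sqrt (4 * ω - c ^ 2)) - c / (2 * Real.sqrt ω)))
    ^ (-(1 / 2 : ℝ))

lemma rpow_neg_half_pow_six {y : ℝ} (hy : 0 ≤ y) : (y ^ (-(1 / 2 : ℝ))) ^ 6 = (y ^ 3)⁻¹ := by
  rw [← rpow_natCast, ← rpow_mul hy, ← rpow_natCast, ← rpow_neg hy]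
  norm_num

lemma varphi_pow_six {ω c : ℝ} (hω : 0 < ω) (hc : |c| < 2 * √ω) (x : ℝ) :
    varphi ω c x ^ 6
      = ((4 * ω - c ^ 2) / √ω) ^ 3 * ((cosh (x * √(4 * ω - c ^ 2)) - c / (2 * √ω)) ^ 3)⁻¹ := by
  have hw := sqrt_pos.2 hω
  have hcw : c / (2 * √ω) < 1 := by
    rw [div_lt_one (by positivity)]; exact (abs_lt.1 hc).2
  have hd : 0 ≤ cosh (x * √(4 * ω - c ^ 2)) - c / (2 * √ω) := by
    linarith [one_le_cosh (x * √(4 * ω - c ^ 2))]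
  have h4 : 0 ≤ 4 * ω - c ^ 2 := by
    nlinarith [sq_abs c, abs_nonneg c, sq_sqrt hω.le]
  rw [varphi, rpow_neg_half_pow_six (by positivity), mul_pow, mul_inv, ← inv_pow, inv_div]

lemma integral_comp_mul_right_of_even {f : ℝ → ℝ} (hf : ∀ x, f (-x) = f x) {a : ℝ}
    (ha : 0 < a) : ∫ x, f (x * a) = 2 / a * ∫ x in Ioi 0, f x := by
  have hf_abs : ∀ x, f |x| = f x := fun x => by
    rcases abs_choice x with h | h <;> rw [h]
    exact hf x
  rw [Measure.integral_comp_mul_right, abs_inv, abs_of_pos ha, smul_eq_mul, div_eq_mul_inv,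
    mul_comm 2, mul_assoc, ← integral_comp_abs]
  simp only [hf_abs]

lemma tendsto_cosh_atTop : Tendsto cosh atTop atTop :=
  tendsto_atTop_mono (fun u => by rw [cosh_eq]; linarith [(exp_pos (-u)).le])
    (tendsto_exp_atTop.atTop_div_const two_pos)

lemma tendsto_inv_cosh_sub_atTop (b : ℝ) :
    Tendsto (fun u => (cosh u - b)⁻¹) atTop (𝓝 0) :=
  (tendsto_atTop_add_const_right _ (-b) tendsto_cosh_atTop).inv_tendsto_atTop

lemma tendsto_sinh_div_cosh_sub_atTop (b : ℝ) :
    Tendsto (fun u => sinh u / (cosh u - b)) atTop (𝓝 1) := by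
  have hrest : Tendsto (fun u => 1 + (b - exp (-u)) * (cosh u - b)⁻¹) atTop (𝓝 1) := by
    simpa using (((tendsto_const_nhds (x := b)).sub
      tendsto_exp_neg_atTop_nhds_zero).mul (tendsto_inv_cosh_sub_atTop b)).const_add 1
  refine hrest.congr' ?_
  filter_upwards [tendsto_cosh_atTop.eventually_gt_atTop b] with u hu
  rw [← cosh_sub_sinh]
  field_simp [(sub_pos.2 hu).ne']
  ring

section CubeInv

variable {b : ℝ}

lemma cosh_sub_pos (hb : b < 1) (u : ℝ) : 0 < cosh u - b := by
  linarith [one_le_cosh u]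

lemma hasDerivAt_arctan_exp_sub_div {s : ℝ} (hs : 0 < s) (hs2 : s ^ 2 = 1 - b ^ 2) (u : ℝ) :
    HasDerivAt (fun u => arctan ((exp u - b) / s)) (s / (2 * (cosh u - b))) u := by
  refine (((hasDerivAt_exp u).sub_const b).div_const s).arctan.congr_deriv ?_
  have hcosh : 2 * exp u * cosh u = exp u ^ 2 + 1 := by
    rw [cosh_eq, exp_neg]; field_simp
  have hb : b < 1 := by nlinarith [sq_nonneg (b - 1)]
  have hd := (cosh_sub_pos hb u).ne'
  have hsq : 1 + ((exp u - b) / s) ^ 2 = 2 * exp u * (cosh u - b) / s ^ 2 := by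
    field_simp
    linear_combination hs2 - hcosh
  rw [hsq]
  field_simp

lemma hasDerivAt_sinh_div_cosh_sub (hb : b < 1) (u : ℝ) :
    HasDerivAt (fun u => sinh u / (cosh u - b)) ((1 - b * cosh u) / (cosh u - b) ^ 2) u := by
  refine ((hasDerivAt_sinh u).div ((hasDerivAt_cosh u).sub_const b)
    (cosh_sub_pos hb u).ne').congr_deriv ?_
  congr 1
  linear_combination cosh_sq_sub_sinh_sq u

lemma hasDerivAt_sinh_div_cosh_sub_sq (hb : b < 1) (u : ℝ) :
    HasDerivAt (fun u => sinh u / (cosh u - b) ^ 2)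
      ((2 - b * cosh u - cosh u ^ 2) / (cosh u - b) ^ 3) u := by
  have hd := (cosh_sub_pos hb u).ne'
  refine ((hasDerivAt_sinh u).div (((hasDerivAt_cosh u).sub_const b).fun_pow 2)
    (pow_ne_zero 2 hd)).congr_deriv ?_
  field_simp
  linear_combination (2 * (cosh u - b)) * cosh_sq_sub_sinh_sq u

/-- Two steps of the reduction formula for `∫ (cosh u - b)⁻ⁿ du` bring it down to
`∫ (cosh u - b)⁻¹ du = 2 / √(1 - b²) · arctan ((eᵘ - b) / √(1 - b²))`. -/
noncomputable def coshSubCubeInvPrimitive (b u : ℝ) : ℝ :=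
  ((1 + 2 * b ^ 2) / √(1 - b ^ 2) * arctan ((exp u - b) / √(1 - b ^ 2))
      + 3 * b / 2 * (sinh u / (cosh u - b))
      + (1 - b ^ 2) / 2 * (sinh u / (cosh u - b) ^ 2)) / (1 - b ^ 2) ^ 2

lemma hasDerivAt_coshSubCubeInvPrimitive (hb : |b| < 1) (u : ℝ) :
    HasDerivAt (coshSubCubeInvPrimitive b) ((cosh u - b) ^ 3)⁻¹ u := by
  have hb2 : 0 < 1 - b ^ 2 := by nlinarith [abs_lt.1 hb, sq_abs b, abs_nonneg b]
  have hs := sqrt_pos.2 hb2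
  have hlt : b < 1 := (abs_lt.1 hb).2
  have hd := (cosh_sub_pos hlt u).ne'
  unfold coshSubCubeInvPrimitive
  refine (((((hasDerivAt_arctan_exp_sub_div hs (sq_sqrt hb2.le) u).const_mul _).fun_add
    ((hasDerivAt_sinh_div_cosh_sub hlt u).const_mul _)).fun_add
    ((hasDerivAt_sinh_div_cosh_sub_sq hlt u).const_mul _)).div_const _).congr_deriv ?_
  field_simp
  ring


lemma tendsto_coshSubCubeInvPrimitive_atTop (hb : |b| < 1) :
    Tendsto (coshSubCubeInvPrimitive b) atTop
      (𝓝 (((1 + 2 * b ^ 2) / √(1 - b ^ 2) * (π / 2) + 3 * b / 2) / (1 - b ^ 2) ^ 2)) := by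
  have hs : 0 < √(1 - b ^ 2) := sqrt_pos.2 (by nlinarith [abs_lt.1 hb])
  have harctan : Tendsto (fun u => arctan ((exp u - b) / √(1 - b ^ 2))) atTop (𝓝 (π / 2)) :=
    (tendsto_arctan_atTop.mono_right nhdsWithin_le_nhds).comp
      ((tendsto_atTop_add_const_right _ (-b) tendsto_exp_atTop).atTop_div_const hs)
  have hsq : Tendsto (fun u => sinh u / (cosh u - b) ^ 2) atTop (𝓝 0) := by
    have h := (tendsto_sinh_div_cosh_sub_atTop b).mul (tendsto_inv_cosh_sub_atTop b)
    rw [one_mul] at h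
    refine h.congr fun u => ?_
    rw [sq, ← div_div, div_eq_mul_inv (sinh u / _)]
  unfold coshSubCubeInvPrimitive
  simpa using ((((harctan.const_mul _).add ((tendsto_sinh_div_cosh_sub_atTop b).const_mul _)).add
    (hsq.const_mul _)).div_const _)

lemma sqrt_one_sub_sq_div_one_sub (hb : b < 1) :
    √(1 - b ^ 2) / (1 - b) = √((1 + b) / (1 - b)) := by
  have h : 0 < 1 - b := sub_pos.2 hb
  rw [show (1 + b) / (1 - b) = (1 - b ^ 2) / (1 - b) ^ 2 by field_simp; ring,
    sqrt_div' _ (sq_nonneg _), sqrt_sq h.le]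

theorem integral_Ioi_inv_cosh_sub_pow_three (hb : |b| < 1) :
    ∫ u in Ioi 0, ((cosh u - b) ^ 3)⁻¹
      = ((1 + 2 * b ^ 2) / √(1 - b ^ 2) * arctan √((1 + b) / (1 - b)) + 3 * b / 2)
          / (1 - b ^ 2) ^ 2 := by
  have hlt : b < 1 := (abs_lt.1 hb).2
  have hs : 0 < √(1 - b ^ 2) := sqrt_pos.2 (by nlinarith [abs_lt.1 hb])
  rw [integral_Ioi_of_hasDerivAt_of_nonneg' (fun u _ => hasDerivAt_coshSubCubeInvPrimitive hb u)
    (fun u _ => by have := cosh_sub_pos hlt u; positivity)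
    (tendsto_coshSubCubeInvPrimitive_atTop hb),
    ← sqrt_one_sub_sq_div_one_sub hlt]
  have harctan : arctan ((1 - b) / √(1 - b ^ 2)) = π / 2 - arctan (√(1 - b ^ 2) / (1 - b)) := by
    rw [← inv_div, arctan_inv_of_pos (div_pos hs (sub_pos.2 hlt))]
  simp only [coshSubCubeInvPrimitive, exp_zero, harctan, sinh_zero, cosh_zero, zero_div,
    mul_zero, add_zero]
  ring

end CubeInv

/-- `∫ ϕ⁶ = 32(c²+2ω)·arctan(√((2√ω+c)/(2√ω-c))) + 24c√(4ω-c²)`. -/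
theorem stmt11 (ω c : ℝ) (hω : 0 < ω)
    (hc1 : -2 * Real.sqrt ω < c) (hc2 : c < 2 * Real.sqrt ω) :
    (∫ x, (varphi ω c x) ^ 6)
      = 32 * (c ^ 2 + 2 * ω)
          * Real.arctan (Real.sqrt ((2 * Real.sqrt ω + c) / (2 * Real.sqrt ω - c)))
        + 24 * c * Real.sqrt (4 * ω - c ^ 2) := by
  have hc : |c| < 2 * √ω := abs_lt.2 ⟨by linarith, hc2⟩
  have h4 : 0 < 4 * ω - c ^ 2 := by nlinarith [sq_abs c, abs_nonneg c, sq_sqrt hω.le]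
  simp_rw [varphi_pow_six hω hc, integral_const_mul]
  set w := √ω
  set a := √(4 * ω - c ^ 2)
  have hw : 0 < w := sqrt_pos.2 hω
  have ha : 0 < a := sqrt_pos.2 h4
  have hw2 : w ^ 2 = ω := sq_sqrt hω.le
  have ha2 : a ^ 2 = 4 * ω - c ^ 2 := sq_sqrt h4.le
  have hb : |c / (2 * w)| < 1 := by
    rw [abs_div, abs_of_pos (by positivity : 0 < 2 * w), div_lt_one (by positivity)]; exact hc
  have hb2 : 1 - (c / (2 * w)) ^ 2 = (a / (2 * w)) ^ 2 := by
    simp only [div_pow, ha2, mul_pow, ← hw2]; field_simp; ring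
  have hratio : (2 * w + c) / (2 * w - c) = (1 + c / (2 * w)) / (1 - c / (2 * w)) := by
    field_simp
  rw [integral_comp_mul_right_of_even (f := fun u => ((cosh u - c / (2 * w)) ^ 3)⁻¹)
    (fun u => by simp only [cosh_neg]) ha, integral_Ioi_inv_cosh_sub_pow_three hb, hratio, hb2,
    sqrt_sq (by positivity), ← ha2, ← hw2]
  field_simp
  ring
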